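/- For the CTW node function on binary trees, c(s) = 1/4 if ℓ(s) < L and c(s) = 1/2 if ℓ(s) = L, the induced context-tree function satisfies C(τ) = ∏_{s ∈ τ} c(s) = 2^{−|τ| − N(τ)}, where N(τ) is the number of leaves of τ of length strictly less than L. Moreover, ∑_{τ ∈ 𝒯_L} C(τ) = 1/2, so that the normalized prior is π_C(τ) = 2^{−|τ| − N(τ) + 1}. -/
import Mathlib
open Finset

def trees (m : ℕ) : ℕ → List (Fin m) → Finset (Finset (List (Fin m)))
  | 0, r => {{r}}
  | (d + 1), r =>
    insert {r}
      ((Fintype.piFinset (fun k : Fin m => trees m d (k :: r))).image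
        (fun t => Finset.univ.biUnion (fun k => t k)))

lemma trees_suffix (m : ℕ) : ∀ (d : ℕ) (r : List (Fin m)) (τ : Finset (List (Fin m))),
    τ ∈ trees m d r → ∀ s ∈ τ, r <:+ s := by
  intro d
  induction d with
  | zero =>
    intro r τ hτ s hs
    simp only [trees, mem_singleton] at hτ
    subst hτ
    simp only [mem_singleton] at hs
    subst hs
    exact List.suffix_rfl
  | succ d ih =>
    intro r τ hτ s hs
    simp only [trees, mem_insert, mem_image] at hτ
    rcases hτ with rfl | ⟨t, ht, rfl⟩
    · simp only [mem_singleton] at hs; subst hs; exact List.suffix_rfl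
    · simp only [mem_biUnion, mem_univ, true_and] at hs
      obtain ⟨k, hk⟩ := hs
      rw [Fintype.mem_piFinset] at ht
      exact (List.suffix_cons k r).trans (ih (k :: r) (t k) (ht k) s hk)

lemma trees_length (m : ℕ) : ∀ (d : ℕ) (r : List (Fin m)) (τ : Finset (List (Fin m))),
    τ ∈ trees m d r → ∀ s ∈ τ, s.length ≤ r.length + d := by
  intro d
  induction d with
  | zero =>
    intro r τ hτ s hs
    simp only [trees, mem_singleton] at hτ; subst hτ
    simp only [mem_singleton] at hs; subst hs; simp
  | succ d ih =>
    intro r τ hτ s hs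
    simp only [trees, mem_insert, mem_image] at hτ
    rcases hτ with rfl | ⟨t, ht, rfl⟩
    · simp only [mem_singleton] at hs; subst hs; simp
    · simp only [mem_biUnion, mem_univ, true_and] at hs
      obtain ⟨k, hk⟩ := hs
      rw [Fintype.mem_piFinset] at ht
      have := ih (k :: r) (t k) (ht k) s hk
      simp only [List.length_cons] at this
      omega

lemma trees_nonempty : ∀ (d : ℕ) (r : List (Fin 2)) (τ : Finset (List (Fin 2))),
    τ ∈ trees 2 d r → τ.Nonempty := by
  intro d
  induction d with
  | zero =>
    intro r τ hτ
    simp only [trees, mem_singleton] at hτ; subst hτ; exact ⟨r, mem_singleton_self r⟩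
  | succ d ih =>
    intro r τ hτ
    simp only [trees, mem_insert, mem_image] at hτ
    rcases hτ with rfl | ⟨t, ht, rfl⟩
    · exact ⟨r, mem_singleton_self r⟩
    · rw [Fintype.mem_piFinset] at ht
      obtain ⟨s, hs⟩ := ih ((0 : Fin 2) :: r) (t 0) (ht 0)
      exact ⟨s, mem_biUnion.2 ⟨_, mem_univ _, hs⟩⟩

lemma cons_suffix_inj {m : ℕ} {j k : Fin m} {r s : List (Fin m)}
    (hj : (j :: r) <:+ s) (hk : (k :: r) <:+ s) : j = k := by
  obtain ⟨u, hu⟩ := hj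
  obtain ⟨v, hv⟩ := hk
  have h := hu.trans hv.symm
  have h2 : j :: r = k :: r := (List.append_inj' h (by simp)).2
  injection h2

lemma trees_disjoint {m : ℕ} {d : ℕ} {r : List (Fin m)} {j k : Fin m} (hjk : j ≠ k)
    {τj τk : Finset (List (Fin m))} (hj : τj ∈ trees m d (j :: r))
    (hk : τk ∈ trees m d (k :: r)) : Disjoint τj τk := by
  rw [Finset.disjoint_left]
  intro s hsj hsk
  exact hjk (cons_suffix_inj (trees_suffix m d _ _ hj s hsj) (trees_suffix m d _ _ hk s hsk))

lemma ctw_prod (L : ℕ) (c : List (Fin 2) → ℝ)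
    (hc : ∀ s : List (Fin 2), s.length ≤ L →
      c s = if s.length < L then 1 / 4 else 1 / 2) :
    ∀ (d : ℕ) (r : List (Fin 2)), r.length + d = L →
      ∀ τ ∈ trees 2 d r,
        (∏ s ∈ τ, c s) =
          (2 : ℝ) ^ (-((τ.card : ℤ) +
            ((τ.filter (fun s => s.length < L)).card : ℤ))) := by
  intro d
  induction d with
  | zero =>
    intro r hr τ hτ
    simp only [trees, mem_singleton] at hτ; subst hτ
    have hcr : c r = 1 / 2 := by rw [hc r (by omega)]; simp [show ¬ r.length < L by omega]
    rw [Finset.prod_singleton, hcr, Finset.filter_singleton,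
      if_neg (show ¬ r.length < L by omega)]
    norm_num [zpow_neg]
  | succ d ih =>
    intro r hr τ hτ
    simp only [trees, mem_insert, mem_image] at hτ
    rcases hτ with rfl | ⟨t, ht, rfl⟩
    · have hcr : c r = 1 / 4 := by rw [hc r (by omega)]; simp [show r.length < L by omega]
      rw [Finset.prod_singleton, hcr, Finset.filter_singleton,
        if_pos (show r.length < L by omega)]
      norm_num [show (-((1:ℤ) + 1)) = -2 by ring, zpow_neg]
    · rw [Fintype.mem_piFinset] at ht
      have hdisj : ∀ j ∈ (univ : Finset (Fin 2)), ∀ k ∈ univ, j ≠ k →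
          Disjoint (t j) (t k) := fun j _ k _ hjk =>
        trees_disjoint hjk (ht j) (ht k)
      have hprod : (∏ s ∈ univ.biUnion (fun k => t k), c s) =
          ∏ k : Fin 2, ∏ s ∈ t k, c s := Finset.prod_biUnion hdisj
      have hcard : ((univ.biUnion (fun k => t k)).card : ℤ) =
          ∑ k : Fin 2, ((t k).card : ℤ) := by
        rw [Finset.card_biUnion hdisj]; push_cast; rfl
      have hfilter : (((univ.biUnion (fun k => t k)).filter
            (fun s => s.length < L)).card : ℤ) =
          ∑ k : Fin 2, (((t k).filter (fun s => s.length < L)).card : ℤ) := by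
        rw [Finset.filter_biUnion, Finset.card_biUnion]
        · push_cast; rfl
        · intro j hj k hk hjk
          exact (hdisj j hj k hk hjk).mono (filter_subset _ _) (filter_subset _ _)
      rw [hprod, hcard, hfilter]
      have hik : ∀ k : Fin 2, (∏ s ∈ t k, c s) =
          (2 : ℝ) ^ (-(((t k).card : ℤ) +
            (((t k).filter (fun s => s.length < L)).card : ℤ))) := fun k =>
        ih (k :: r) (by simp; omega) (t k) (ht k)
      rw [Fin.prod_univ_two, Fin.sum_univ_two, Fin.sum_univ_two, hik 0, hik 1,
        ← zpow_add₀ (by norm_num : (2:ℝ) ≠ 0)]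
      ring_nf

lemma ctw_sum (L : ℕ) (c : List (Fin 2) → ℝ)
    (hc : ∀ s : List (Fin 2), s.length ≤ L →
      c s = if s.length < L then 1 / 4 else 1 / 2) :
    ∀ (d : ℕ) (r : List (Fin 2)), r.length + d = L →
      (∑ τ ∈ trees 2 d r, ∏ s ∈ τ, c s) = 1 / 2 := by
  intro d
  induction d with
  | zero =>
    intro r hr
    simp only [trees, sum_singleton, Finset.prod_singleton]
    rw [hc r (by omega)]; simp [show ¬ r.length < L by omega]
  | succ d ih =>
    intro r hr
    have hnotmem : ({r} : Finset (List (Fin 2))) ∉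
        ((Fintype.piFinset (fun k : Fin 2 => trees 2 d (k :: r))).image
          (fun t => Finset.univ.biUnion (fun k => t k))) := by
      rw [mem_image]
      rintro ⟨t, ht, heq⟩
      rw [Fintype.mem_piFinset] at ht
      obtain ⟨s, hs⟩ := trees_nonempty d (0 :: r) (t 0) (ht 0)
      have hsmem : s ∈ ({r} : Finset (List (Fin 2))) := by
        rw [← heq]; exact mem_biUnion.2 ⟨0, mem_univ _, hs⟩
      rw [mem_singleton] at hsmem
      subst hsmem
      have := (trees_suffix 2 d (0 :: s) (t 0) (ht 0) s hs).length_le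
      simp at this
    have hinj : Set.InjOn (fun t : Fin 2 → Finset (List (Fin 2)) =>
        Finset.univ.biUnion (fun k => t k))
        (Fintype.piFinset (fun k : Fin 2 => trees 2 d (k :: r))) := by
      intro t1 h1 t2 h2 heq
      rw [Finset.mem_coe, Fintype.mem_piFinset] at h1 h2
      replace heq : univ.biUnion (fun k => t1 k) = univ.biUnion (fun k => t2 k) := heq
      funext k
      ext s
      constructor
      · intro hs
        have : s ∈ Finset.univ.biUnion (fun j => t2 j) := by
          rw [← heq]; exact mem_biUnion.2 ⟨k, mem_univ _, hs⟩
        obtain ⟨j, _, hj⟩ := mem_biUnion.1 this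
        have : j = k := cons_suffix_inj
          (trees_suffix 2 d (j :: r) (t2 j) (h2 j) s hj)
          (trees_suffix 2 d (k :: r) (t1 k) (h1 k) s hs)
        rwa [← this]
      · intro hs
        have : s ∈ Finset.univ.biUnion (fun j => t1 j) := by
          rw [heq]; exact mem_biUnion.2 ⟨k, mem_univ _, hs⟩
        obtain ⟨j, _, hj⟩ := mem_biUnion.1 this
        have : j = k := cons_suffix_inj
          (trees_suffix 2 d (j :: r) (t1 j) (h1 j) s hj)
          (trees_suffix 2 d (k :: r) (t2 k) (h2 k) s hs)
        rwa [← this]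
    rw [show trees 2 (d+1) r = insert {r}
      ((Fintype.piFinset (fun k : Fin 2 => trees 2 d (k :: r))).image
        (fun t => Finset.univ.biUnion (fun k => t k))) from rfl]
    rw [Finset.sum_insert hnotmem, Finset.sum_image hinj, Finset.prod_singleton]
    have h1 : c r = 1 / 4 := by rw [hc r (by omega)]; simp [show r.length < L by omega]
    have h2 : ∑ t ∈ Fintype.piFinset (fun k : Fin 2 => trees 2 d (k :: r)),
        ∏ s ∈ Finset.univ.biUnion (fun k => t k), c s = 1 / 4 := by
      have : ∀ t ∈ Fintype.piFinset (fun k : Fin 2 => trees 2 d (k :: r)),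
          (∏ s ∈ Finset.univ.biUnion (fun k => t k), c s) =
          ∏ k : Fin 2, ∏ s ∈ t k, c s := by
        intro t ht
        rw [Fintype.mem_piFinset] at ht
        exact Finset.prod_biUnion (fun j _ k _ hjk => trees_disjoint hjk (ht j) (ht k))
      rw [Finset.sum_congr rfl this]
      have hps : (∑ x ∈ Fintype.piFinset (fun k : Fin 2 => trees 2 d (k :: r)),
          ∏ k : Fin 2, ∏ s ∈ x k, c s) =
          ∏ k : Fin 2, ∑ τ ∈ trees 2 d (k :: r), ∏ s ∈ τ, c s :=
        (Finset.prod_univ_sum _ (fun _ τ => ∏ s ∈ τ, c s)).symm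
      rw [hps]
      have hhalf := fun k : Fin 2 => ih (k :: r) (by simp only [List.length_cons]; omega)
      rw [Fin.prod_univ_two, hhalf 0, hhalf 1]
      norm_num
    rw [h1, h2]
    norm_num

/-- for the binary CTW node function `c(s) = 1/4` if `ℓ(s) < L`
and `c(s) = 1/2` if `ℓ(s) = L`, the induced context-tree function satisfies
`C(τ) = 2^{−|τ| − N(τ)}` with `N(τ)` the number of leaves of length `< L`;
moreover `∑_{τ ∈ 𝒯_L} C(τ) = 1/2`, so the normalized prior is
`π_C(τ) = 2^{−|τ| − N(τ) + 1}`. -/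
theorem ctw_function_and_normalization (L : ℕ) (c : List (Fin 2) → ℝ)
    (hc : ∀ s : List (Fin 2), s.length ≤ L →
      c s = if s.length < L then 1 / 4 else 1 / 2) :
    (∀ τ ∈ trees 2 L ([] : List (Fin 2)),
      (∏ s ∈ τ, c s) =
        (2 : ℝ) ^ (-((τ.card : ℤ) +
          ((τ.filter (fun s => s.length < L)).card : ℤ)))) ∧
    (∑ τ ∈ trees 2 L ([] : List (Fin 2)), ∏ s ∈ τ, c s) = 1 / 2 ∧
    (∀ τ ∈ trees 2 L ([] : List (Fin 2)),
      (∏ s ∈ τ, c s) / (∑ τ' ∈ trees 2 L ([] : List (Fin 2)), ∏ s ∈ τ', c s) =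
        (2 : ℝ) ^ (-((τ.card : ℤ) +
          ((τ.filter (fun s => s.length < L)).card : ℤ)) + 1)) := by
  have hprod := ctw_prod L c hc L ([] : List (Fin 2)) (by simp)
  have hsum := ctw_sum L c hc L ([] : List (Fin 2)) (by simp)
  refine ⟨hprod, hsum, ?_⟩
  intro τ hτ
  rw [hsum, hprod τ hτ, zpow_add_one₀ (by norm_num : (2:ℝ) ≠ 0)]
  ring
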